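/- arXiv:1303.3677 — 4 statements merged into one kernel-verified Lean document; each statement's English description precedes it below -/
import Mathlib

section
/- Let a, b, c, d, a', b', c', d' be real numbers such that F((a,b),(c,d)) = F((a',b'),(c',d')) and this common value is nonzero. Then the linear span of {a·e₁ + b·e₂, a·e₃ + b·e₄} is different from the linear span of {c'·e₁ + d'·e₃, c'·e₂ + d'·e₄}. -/
/-- The standard basis vectors of `ℝ⁴` (as a Euclidean space). -/
noncomputable def e (i : Fin 4) : EuclideanSpace ℝ (Fin 4) := EuclideanSpace.single i 1

/-- `F ((a,b),(c,d)) = ac·e₁ + bc·e₂ + ad·e₃ + bd·e₄`. -/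
noncomputable def Fmap (a b c d : ℝ) : EuclideanSpace ℝ (Fin 4) :=
  (a * c) • e 0 + (b * c) • e 1 + (a * d) • e 2 + (b * d) • e 3

/-!
Read a vector of `ℝ⁴` as the `2 × 2` matrix with columns `(x₁, x₂)` and `(x₃, x₄)`. The first
span consists of the matrices whose columns are multiples of `(a, b)`, the second of those whose
rows are multiples of `(c', d')`. If `d' ≠ 0`, the generator `a • e₁ + b • e₂` (second column zero)
lies in the second span only if it is zero; if `d' = 0`, every element of the second span has zero
second column, so `a • e₃ + b • e₄` must vanish. Either way `a = b = 0`, whence `F = 0`.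
-/

@[simp]
lemma e_apply (i j : Fin 4) : e i j = if i = j then 1 else 0 := by
  simp [e, eq_comm]

lemma Fmap_zero_zero (c d : ℝ) : Fmap 0 0 c d = 0 := by
  simp [Fmap]

lemma eq_zero_of_mem_span_rows {a b c d : ℝ}
    (h₁ : a • e 0 + b • e 1 ∈
      Submodule.span ℝ ({c • e 0 + d • e 2, c • e 1 + d • e 3} : Set (EuclideanSpace ℝ (Fin 4))))
    (h₂ : a • e 2 + b • e 3 ∈
      Submodule.span ℝ ({c • e 0 + d • e 2, c • e 1 + d • e 3} : Set (EuclideanSpace ℝ (Fin 4)))) :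
    a = 0 ∧ b = 0 := by
  obtain ⟨x, y, hxy⟩ := Submodule.mem_span_pair.mp h₁
  obtain ⟨u, v, huv⟩ := Submodule.mem_span_pair.mp h₂
  have hx₀ : x * c = a := by simpa using congrArg (· 0) hxy
  have hy₁ : y * c = b := by simpa using congrArg (· 1) hxy
  have hx₂ : x * d = 0 := by simpa using congrArg (· 2) hxy
  have hy₃ : y * d = 0 := by simpa using congrArg (· 3) hxy
  have hu₂ : u * d = a := by simpa using congrArg (· 2) huv
  have hv₃ : v * d = b := by simpa using congrArg (· 3) huv
  rcases eq_or_ne d 0 with rfl | hd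
  · exact ⟨by simpa using hu₂.symm, by simpa using hv₃.symm⟩
  · obtain ⟨rfl, rfl⟩ : x = 0 ∧ y = 0 :=
      ⟨(mul_eq_zero.mp hx₂).resolve_right hd, (mul_eq_zero.mp hy₃).resolve_right hd⟩
    exact ⟨by simpa using hx₀.symm, by simpa using hy₁.symm⟩

theorem stmt_3_general (a b c d c' d' : ℝ)
    (hne : Fmap a b c d ≠ 0) :
    Submodule.span ℝ ({a • e 0 + b • e 1, a • e 2 + b • e 3} :
        Set (EuclideanSpace ℝ (Fin 4))) ≠
      Submodule.span ℝ ({c' • e 0 + d' • e 2, c' • e 1 + d' • e 3} :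
        Set (EuclideanSpace ℝ (Fin 4))) := by
  intro h
  obtain ⟨rfl, rfl⟩ := eq_zero_of_mem_span_rows
    (h ▸ Submodule.subset_span (Set.mem_insert _ _))
    (h ▸ Submodule.subset_span (Set.mem_insert_of_mem _ rfl))
  exact hne (Fmap_zero_zero c d)

theorem stmt_3 (a b c d a' b' c' d' : ℝ)
    (heq : Fmap a b c d = Fmap a' b' c' d') (hne : Fmap a b c d ≠ 0) :
    Submodule.span ℝ ({a • e 0 + b • e 1, a • e 2 + b • e 3} :
        Set (EuclideanSpace ℝ (Fin 4))) ≠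
      Submodule.span ℝ ({c' • e 0 + d' • e 2, c' • e 1 + d' • e 3} :
        Set (EuclideanSpace ℝ (Fin 4))) :=
  stmt_3_general a b c d c' d' hne
end

section
/- Let w₁, w₂ be unit vectors in ℝ³ with third coordinate zero, and let S₁ = span{e₃, w₁} and S₂ = span{e₃, w₂} be the corresponding 2-dimensional subspaces of ℝ³ (both orthogonal to the plane {x₃ = 0}). Then for every continuously differentiable compactly supported vector field X : ℝ³ → ℝ³, ∫_{{x : x₃ ≥ 0}} (⟨e₃, DX(x) e₃⟩ + ⟨w₁, DX(x) w₁⟩) dx + ∫_{{x : x₃ ≤ 0}} (⟨e₃, DX(x) e₃⟩ + ⟨w₂, DX(x) w₂⟩) dx = 0, where dx is Lebesgue measure on ℝ³. (That is, the 2-varifold V = (L³∟{x₃ ≥ 0}) × δ_{S₁} + (L³∟{x₃ ≤ 0}) × δ_{S₂} is stationary.) -/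
/-!
If a set `H` is invariant under translation by multiples of `v`, then `t ↦ ∫_H X(x + t v) dx` is
constant, and differentiating under the integral sign gives `∫_H DX(x) v dx = 0`. Since `w₁, w₂`
are parallel to the plane `{x₃ = 0}`, this kills the tangential terms over each half-space. The
normal terms `⟪e₃, DX(x) e₃⟫` do not vanish over each half-space separately, but the half-spaces
meet only in the null plane `{x₃ = 0}`, so together they give the integral over all of `ℝ³`,
which vanishes for the same reason.
-/

open MeasureTheory
open scoped RealInnerProductSpace

/-- The standard basis vectors of `ℝ³` (as a Euclidean space). -/
noncomputable def e3 (i : Fin 3) : EuclideanSpace ℝ (Fin 3) := EuclideanSpace.single i 1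

open Metric Set

theorem preimage_add_const_preimage_of_map_eq_zero {E G H : Type*} [AddZeroClass E]
    [AddZeroClass G] [FunLike H E G] [AddMonoidHomClass H E G] (ℓ : H) {c : E} (hc : ℓ c = 0)
    (S : Set G) :
    (· + c) ⁻¹' (ℓ ⁻¹' S) = ℓ ⁻¹' S := by
  ext x
  simp [hc]

section

variable {E F : Type*} [NormedAddCommGroup E] [NormedSpace ℝ E] [MeasurableSpace E]
  [BorelSpace E] [NormedAddCommGroup F] [NormedSpace ℝ F] {μ : Measure E} {f : E → F}

theorem hasDerivAt_integral_comp_add_smul [IsFiniteMeasureOnCompacts μ] (hf : ContDiff ℝ 1 f)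
    (hfc : HasCompactSupport f) (v : E) (t₀ : ℝ) :
    HasDerivAt (fun t : ℝ ↦ ∫ x, f (x + t • v) ∂μ) (∫ x, fderiv ℝ f (x + t₀ • v) v ∂μ) t₀ := by
  have hf' : Continuous (fderiv ℝ f) := hf.continuous_fderiv one_ne_zero
  obtain ⟨y₀, hy₀⟩ := hf'.norm.exists_forall_ge_of_hasCompactSupport (hfc.fderiv ℝ).norm
  -- for `t ∈ ball t₀ 1`, `fderiv ℝ f (x + t • v)` vanishes unless `x` lies in the compact set `K`
  set K := (fun p : E × ℝ ↦ p.1 - p.2 • v) '' (tsupport f ×ˢ closedBall t₀ 1)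
  have hK : IsCompact K := (hfc.prod (isCompact_closedBall t₀ 1)).image (by fun_prop)
  have h_bound : ∀ x, ∀ t ∈ ball t₀ 1,
      ‖fderiv ℝ f (x + t • v) v‖ ≤ K.indicator (fun _ ↦ ‖fderiv ℝ f y₀‖ * ‖v‖) x := by
    intro x t ht
    by_cases hx : x ∈ K
    · rw [indicator_of_mem hx]
      exact (ContinuousLinearMap.le_opNorm _ v).trans (by gcongr; exact hy₀ _)
    · have : x + t • v ∉ tsupport f := fun h ↦
        hx ⟨(x + t • v, t), ⟨h, ball_subset_closedBall ht⟩, add_sub_cancel_right x _⟩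
      rw [image_eq_zero_of_notMem_tsupport (fun h ↦ this (tsupport_fderiv_subset ℝ h))]
      simp [indicator_of_notMem hx]
  have h_diff : ∀ x, ∀ t ∈ ball t₀ 1,
      HasDerivAt (fun s : ℝ ↦ f (x + s • v)) (fderiv ℝ f (x + t • v) v) t := fun x t _ ↦
    ((hf.differentiable one_ne_zero _).hasFDerivAt.comp_hasDerivAt t
      (((hasDerivAt_id t).smul_const v).const_add x)).congr_deriv (by simp)
  have hF_int : ∀ t : ℝ, Integrable (fun x ↦ f (x + t • v)) μ := fun t ↦
    (hf.continuous.comp (continuous_add_const _)).integrable_of_hasCompactSupport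
      (hfc.comp_homeomorph (Homeomorph.addRight (t • v)))
  have hF'_int : Integrable (fun x ↦ fderiv ℝ f (x + t₀ • v) v) μ :=
    ((hf'.clm_apply continuous_const).comp (continuous_add_const _)).integrable_of_hasCompactSupport
      ((hfc.fderiv_apply ℝ v).comp_homeomorph (Homeomorph.addRight (t₀ • v)))
  exact (hasDerivAt_integral_of_dominated_loc_of_deriv_le (ball_mem_nhds t₀ one_pos)
    (.of_forall fun t ↦ (hF_int t).aestronglyMeasurable) (hF_int t₀) hF'_int.aestronglyMeasurable
    (.of_forall h_bound) ((integrableOn_const hK.measure_lt_top.ne).integrable_indicator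
      hK.isClosed.measurableSet) (.of_forall h_diff)).2

theorem integral_fderiv_apply_eq_zero_of_measurePreserving [IsFiniteMeasureOnCompacts μ]
    (hf : ContDiff ℝ 1 f) (hfc : HasCompactSupport f) {v : E}
    (hμ : ∀ t : ℝ, MeasurePreserving (· + t • v) μ μ) :
    ∫ x, fderiv ℝ f x v ∂μ = 0 := by
  have hconst : (fun t : ℝ ↦ ∫ x, f (x + t • v) ∂μ) = fun _ ↦ ∫ x, f x ∂μ :=
    funext fun t ↦ (hμ t).integral_comp (measurableEmbedding_addRight _) f
  have hderiv := hasDerivAt_integral_comp_add_smul (μ := μ) hf hfc v 0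
  rw [hconst] at hderiv
  simpa using hderiv.unique (hasDerivAt_const 0 _)

theorem setIntegral_fderiv_apply_preimage_eq_zero [IsFiniteMeasureOnCompacts μ]
    [μ.IsAddRightInvariant] (hf : ContDiff ℝ 1 f) (hfc : HasCompactSupport f) (ℓ : E →L[ℝ] ℝ)
    {v : E} (hv : ℓ v = 0) (S : Set ℝ) :
    ∫ x in ℓ ⁻¹' S, fderiv ℝ f x v ∂μ = 0 := by
  refine integral_fderiv_apply_eq_zero_of_measurePreserving hf hfc fun t ↦ ?_
  have := (measurePreserving_add_right μ (t • v)).restrict_preimage_emb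
    (measurableEmbedding_addRight _) (ℓ ⁻¹' S)
  rwa [preimage_add_const_preimage_of_map_eq_zero ℓ (by simp [hv])] at this

theorem setIntegral_preimage_Ici_add_setIntegral_preimage_Iic [FiniteDimensional ℝ E]
    [μ.IsAddHaarMeasure] {ℓ : E →L[ℝ] ℝ} (hℓ : ℓ ≠ 0) {g : E → F} (hg : Integrable g μ) :
    ∫ x in ℓ ⁻¹' Ici 0, g x ∂μ + ∫ x in ℓ ⁻¹' Iic 0, g x ∂μ = ∫ x, g x ∂μ := by
  have hker : μ (LinearMap.ker (ℓ : E →ₗ[ℝ] ℝ)) = 0 := by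
    refine Measure.addHaar_submodule μ _ fun h ↦ hℓ ?_
    ext x
    simpa using (LinearMap.ker_eq_top.1 h ▸ rfl : (ℓ : E →ₗ[ℝ] ℝ) x = 0)
  have hdisj : AEDisjoint μ (ℓ ⁻¹' Ici 0) (ℓ ⁻¹' Iic 0) :=
    measure_mono_null (fun x hx ↦ le_antisymm hx.2 hx.1) hker
  rw [← setIntegral_union₀ hdisj (measurableSet_Iic.preimage ℓ.measurable).nullMeasurableSet
    hg.integrableOn hg.integrableOn, ← preimage_union, Ici_union_Iic, preimage_univ,
    setIntegral_univ]

end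

theorem stmt_8_general (w₁ w₂ : EuclideanSpace ℝ (Fin 3))
    (hw₁3 : w₁ 2 = 0) (hw₂3 : w₂ 2 = 0)
    (X : EuclideanSpace ℝ (Fin 3) → EuclideanSpace ℝ (Fin 3))
    (hX : ContDiff ℝ 1 X) (hXc : HasCompactSupport X) :
    (∫ x in {x : EuclideanSpace ℝ (Fin 3) | 0 ≤ x 2},
        (⟪e3 2, fderiv ℝ X x (e3 2)⟫ + ⟪w₁, fderiv ℝ X x w₁⟫))
    + (∫ x in {x : EuclideanSpace ℝ (Fin 3) | x 2 ≤ 0},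
        (⟪e3 2, fderiv ℝ X x (e3 2)⟫ + ⟪w₂, fderiv ℝ X x w₂⟫)) = 0 := by
  set ℓ : EuclideanSpace ℝ (Fin 3) →L[ℝ] ℝ := EuclideanSpace.proj 2
  have hDX : ∀ v, Integrable (fun x ↦ fderiv ℝ X x v) :=
    fun v ↦ ((hX.continuous_fderiv one_ne_zero).clm_apply continuous_const)
      |>.integrable_of_hasCompactSupport (hXc.fderiv_apply ℝ v)
  have htangent : ∀ w, ℓ w = 0 → ∀ S, ∫ x in ℓ ⁻¹' S, ⟪w, fderiv ℝ X x w⟫ = 0 := fun w hw S ↦ by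
    rw [integral_inner (hDX w).integrableOn, setIntegral_fderiv_apply_preimage_eq_zero hX hXc ℓ hw,
      inner_zero_right]
  have hℓ : ℓ ≠ 0 := fun h ↦ by simpa [ℓ, e3] using congr($h (e3 2))
  have hint : ∀ u, Integrable (fun x ↦ ⟪u, fderiv ℝ X x u⟫) := fun u ↦ (hDX u).const_inner u
  change (∫ x in ℓ ⁻¹' Ici 0, _) + (∫ x in ℓ ⁻¹' Iic 0, _) = 0
  rw [integral_add (hint _).integrableOn (hint _).integrableOn,
    integral_add (hint _).integrableOn (hint _).integrableOn, htangent w₁ hw₁3, htangent w₂ hw₂3,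
    add_zero, add_zero, setIntegral_preimage_Ici_add_setIntegral_preimage_Iic hℓ (hint _),
    integral_inner (hDX _), integral_fderiv_apply_eq_zero_of_measurePreserving hX hXc
    fun t ↦ measurePreserving_add_right _ _, inner_zero_right]

theorem stmt_8 (w₁ w₂ : EuclideanSpace ℝ (Fin 3))
    (hw₁ : ‖w₁‖ = 1) (hw₂ : ‖w₂‖ = 1) (hw₁3 : w₁ 2 = 0) (hw₂3 : w₂ 2 = 0)
    (X : EuclideanSpace ℝ (Fin 3) → EuclideanSpace ℝ (Fin 3))
    (hX : ContDiff ℝ 1 X) (hXc : HasCompactSupport X) :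
    (∫ x in {x : EuclideanSpace ℝ (Fin 3) | 0 ≤ x 2},
        (⟪e3 2, fderiv ℝ X x (e3 2)⟫ + ⟪w₁, fderiv ℝ X x w₁⟫))
    + (∫ x in {x : EuclideanSpace ℝ (Fin 3) | x 2 ≤ 0},
        (⟪e3 2, fderiv ℝ X x (e3 2)⟫ + ⟪w₂, fderiv ℝ X x w₂⟫)) = 0 :=
  stmt_8_general w₁ w₂ hw₁3 hw₂3 X hX hXc
end

section
/- Let d > 0, α₀ ∈ ℝ, and define r(α) = √(d / cos(2(α − α₀))) for α with |α − α₀| < π/4. Then r is twice differentiable on this interval, with r'(α) = √d · (cos(2(α−α₀)))^{−3/2} · sin(2(α−α₀)), and r satisfies the differential equation r(α)·r''(α) − 3·(r'(α))² − 2·(r(α))² = 0 for all α with |α − α₀| < π/4. -/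
/-! Write `c = cos (2 (α - α₀)) > 0` and `t = c ^ (-1/2)`, so that `r = √d t`, `r' = √d t³ sin`
and `r'' = √d (3 t⁵ sin² + 2 t³ c)`. Then `r r'' - 3 r'² - 2 r² = 2 (√d)² t² (t² c - 1) = 0`. -/

open Real Topology

lemma cos_two_mul_sub_pos {α α₀ : ℝ} (h : |α - α₀| < π / 4) : 0 < cos (2 * (α - α₀)) := by
  obtain ⟨hlo, hhi⟩ := abs_lt.mp h
  exact cos_pos_of_mem_Ioo ⟨by linarith, by linarith⟩

lemma hasDerivAt_two_mul_sub (α₀ α : ℝ) : HasDerivAt (fun a : ℝ => 2 * (a - α₀)) 2 α := by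
  simpa using ((hasDerivAt_id α).sub_const α₀).const_mul 2

lemma rpow_neg_natCast_div_two {c : ℝ} (hc : 0 ≤ c) (n : ℕ) :
    c ^ (-(n : ℝ) / 2) = (c ^ (-(1 : ℝ) / 2)) ^ n := by
  rw [← rpow_natCast, ← rpow_mul hc]
  ring_nf

lemma sqrt_div_eq_sqrt_mul_rpow (d : ℝ) {c : ℝ} (hc : 0 ≤ c) :
    √(d / c) = √d * c ^ (-(1 : ℝ) / 2) := by
  rw [sqrt_div' d hc, div_eq_mul_inv, sqrt_eq_rpow c, ← rpow_neg hc]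
  ring_nf

lemma HasDerivAt.sqrt_const_div {g : ℝ → ℝ} {g' x : ℝ} (d : ℝ) (hg : HasDerivAt g g' x)
    (hx : 0 < g x) :
    HasDerivAt (fun a => √(d / g a)) (-(√d * g x ^ (-(3 : ℝ) / 2) * g') / 2) x := by
  have hpos : ∀ᶠ a in 𝓝 x, 0 < g a := hg.continuousAt.eventually (lt_mem_nhds hx)
  have hrpow := (hg.rpow_const (p := -(1 : ℝ) / 2) (Or.inl hx.ne')).const_mul √d
  refine (hrpow.congr_of_eventuallyEq ?_).congr_deriv ?_
  · filter_upwards [hpos] with a ha using sqrt_div_eq_sqrt_mul_rpow d ha.le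
  · norm_num
    ring

theorem stmt_9_general (d α₀ : ℝ) :
    ∀ α : ℝ, |α - α₀| < π / 4 →
      HasDerivAt (fun a => Real.sqrt (d / Real.cos (2 * (a - α₀))))
        (Real.sqrt d * Real.cos (2 * (α - α₀)) ^ (-(3 : ℝ) / 2) *
          Real.sin (2 * (α - α₀))) α ∧
      ∃ r'' : ℝ,
        HasDerivAt
          (fun a => Real.sqrt d * Real.cos (2 * (a - α₀)) ^ (-(3 : ℝ) / 2) *
            Real.sin (2 * (a - α₀))) r'' α ∧
        Real.sqrt (d / Real.cos (2 * (α - α₀))) * r''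
            - 3 * (Real.sqrt d * Real.cos (2 * (α - α₀)) ^ (-(3 : ℝ) / 2) *
                Real.sin (2 * (α - α₀))) ^ 2
            - 2 * Real.sqrt (d / Real.cos (2 * (α - α₀))) ^ 2 = 0 := by
  intro α hα
  have hc := cos_two_mul_sub_pos hα
  have hcos := (hasDerivAt_two_mul_sub α₀ α).cos
  have hsin := (hasDerivAt_two_mul_sub α₀ α).sin
  refine ⟨(hcos.sqrt_const_div d hc).congr_deriv (by ring), _,
    ((hcos.rpow_const (p := -(3 : ℝ) / 2) (Or.inl hc.ne')).const_mul √d).mul hsin, ?_⟩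
  set c := cos (2 * (α - α₀))
  set t := c ^ (-(1 : ℝ) / 2)
  have ht : t ^ 2 * c = 1 := by
    rw [← rpow_neg_natCast_div_two hc.le]
    norm_num [rpow_neg_one, hc.ne']
  have h3 : c ^ (-(3 : ℝ) / 2) = t ^ 3 := by
    simpa using rpow_neg_natCast_div_two hc.le 3
  have h5 : c ^ (-(3 : ℝ) / 2 - 1) = t ^ 5 := by
    rw [← rpow_neg_natCast_div_two hc.le]
    norm_num
  rw [sqrt_div_eq_sqrt_mul_rpow d hc.le, h3, h5]
  linear_combination 2 * √d ^ 2 * t ^ 2 * ht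

theorem stmt_9 (d α₀ : ℝ) (hd : 0 < d) :
    ∀ α : ℝ, |α - α₀| < π / 4 →
      HasDerivAt (fun a => Real.sqrt (d / Real.cos (2 * (a - α₀))))
        (Real.sqrt d * Real.cos (2 * (α - α₀)) ^ (-(3 : ℝ) / 2) *
          Real.sin (2 * (α - α₀))) α ∧
      ∃ r'' : ℝ,
        HasDerivAt
          (fun a => Real.sqrt d * Real.cos (2 * (a - α₀)) ^ (-(3 : ℝ) / 2) *
            Real.sin (2 * (a - α₀))) r'' α ∧
        Real.sqrt (d / Real.cos (2 * (α - α₀))) * r''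
            - 3 * (Real.sqrt d * Real.cos (2 * (α - α₀)) ^ (-(3 : ℝ) / 2) *
                Real.sin (2 * (α - α₀))) ^ 2
            - 2 * Real.sqrt (d / Real.cos (2 * (α - α₀))) ^ 2 = 0 :=
  stmt_9_general d α₀
end

section
/- Let d > 0 and let α₁ ≤ α ≤ α₂ be real numbers with α − α₁ = α₂ − α ∈ [0, π/4). Then for every β ∈ ℝ: (i) U^{d,α₁}(α,β) = U^{d,α₂}(α,β); and (ii) N(∂U^{d,α₁}/∂α (α,β)) − N(∂U^{d,α₂}/∂α (α,β)) = 2·sin(2(α−α₁)) · N(U^{d,α₁}(α,β)), i.e., the difference of the two unit co-normals is the radial vector at the point scaled by 2 sin(2(α−α₁)). -/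
open Real

/-- `r^{d,α₀}(α) = √(d / cos(2(α−α₀)))`. -/
noncomputable def rr (d α₀ α : ℝ) : ℝ := Real.sqrt (d / Real.cos (2 * (α - α₀)))

/-- The surface parameterization
`U^{d,α₀}(α,β) = r(α)·(cos α cos β, sin α cos β, cos α sin β, sin α sin β)`. -/
noncomputable def U (d α₀ α β : ℝ) : EuclideanSpace ℝ (Fin 4) :=
  rr d α₀ α •
    (WithLp.toLp 2 ![Real.cos α * Real.cos β, Real.sin α * Real.cos β,
       Real.cos α * Real.sin β, Real.sin α * Real.sin β] :
      EuclideanSpace ℝ (Fin 4))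

/-- Radial unit vector `N(x) = x / ‖x‖`. -/
noncomputable def N (x : EuclideanSpace ℝ (Fin 4)) : EuclideanSpace ℝ (Fin 4) :=
  ‖x‖⁻¹ • x

/-! Write `U^{d,α₀} = r · v`, where `v(α,β)` is a unit vector whose `α`-derivative `v'` is a unit
vector orthogonal to `v`. Since `r'/r = tan θ` with `θ = 2(α − α₀)`, the unit co-normal is
`sin θ · v + cos θ · v'`. For `α₀ = α₁, α₂` the angle is `θ = ±2(α − α₁)`, so `r` agrees (cosine is
even) while the co-normals differ by `2 sin(2(α − α₁)) · v`, and `N(U) = v`. -/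

section

variable (α β : ℝ)

noncomputable def sphereVec : EuclideanSpace ℝ (Fin 4) :=
  WithLp.toLp 2 ![cos α * cos β, sin α * cos β, cos α * sin β, sin α * sin β]

noncomputable def sphereVecDeriv : EuclideanSpace ℝ (Fin 4) :=
  WithLp.toLp 2 ![-sin α * cos β, cos α * cos β, -sin α * sin β, cos α * sin β]

lemma sphereVec_eq : sphereVec α β =
    cos α • !₂[cos β, 0, sin β, 0] + sin α • !₂[0, cos β, 0, sin β] := by
  ext i; fin_cases i <;> simp [sphereVec, mul_comm]

lemma hasDerivAt_sphereVec : HasDerivAt (sphereVec · β) (sphereVecDeriv α β) α := by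
  simp only [sphereVec_eq]
  refine (((hasDerivAt_cos α).smul_const _).add ((hasDerivAt_sin α).smul_const _)).congr_deriv ?_
  ext i; fin_cases i <;> simp [sphereVecDeriv, mul_comm]

lemma norm_smul_sphereVec_add_smul_sphereVecDeriv (a b : ℝ) :
    ‖a • sphereVec α β + b • sphereVecDeriv α β‖ = √(a ^ 2 + b ^ 2) := by
  rw [EuclideanSpace.norm_eq]
  congr 1
  simp [sphereVec, sphereVecDeriv, Fin.sum_univ_four, sq_abs]
  linear_combination (a ^ 2 + b ^ 2) * (sin β ^ 2 + cos β ^ 2) * sin_sq_add_cos_sq α +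
    (a ^ 2 + b ^ 2) * sin_sq_add_cos_sq β

lemma norm_sphereVec : ‖sphereVec α β‖ = 1 := by
  simpa using norm_smul_sphereVec_add_smul_sphereVecDeriv α β 1 0

end

lemma U_eq_smul_sphereVec (d α₀ α β : ℝ) : U d α₀ α β = rr d α₀ α • sphereVec α β := rfl

lemma rr_pos {d : ℝ} (hd : 0 < d) {α₀ α : ℝ} (hc : 0 < cos (2 * (α - α₀))) :
    0 < rr d α₀ α :=
  sqrt_pos.2 (div_pos hd hc)

lemma hasDerivAt_rr {d : ℝ} (hd : 0 < d) {α₀ α : ℝ} (hc : 0 < cos (2 * (α - α₀))) :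
    HasDerivAt (rr d α₀) (rr d α₀ α * sin (2 * (α - α₀)) / cos (2 * (α - α₀))) α := by
  have hcos : HasDerivAt (fun a => cos (2 * (a - α₀))) (-2 * sin (2 * (α - α₀))) α := by
    convert (((hasDerivAt_id' α).sub_const α₀).const_mul 2).cos using 1
    ring
  have hquot : HasDerivAt (fun a => d / cos (2 * (a - α₀)))
      (2 * d * sin (2 * (α - α₀)) / cos (2 * (α - α₀)) ^ 2) α :=
    ((hasDerivAt_const α d).div hcos hc.ne').congr_deriv (by ring)
  have hr2 : rr d α₀ α ^ 2 = d / cos (2 * (α - α₀)) := sq_sqrt (div_pos hd hc).le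
  have hr := rr_pos hd hc
  refine (hquot.sqrt (div_pos hd hc).ne').congr_deriv ?_
  change _ / (2 * rr d α₀ α) = _
  field_simp
  rw [hr2]
  field_simp

lemma hasDerivAt_U {d : ℝ} (hd : 0 < d) {α₀ α : ℝ} (β : ℝ) (hc : 0 < cos (2 * (α - α₀))) :
    HasDerivAt (U d α₀ · β) ((rr d α₀ α / cos (2 * (α - α₀))) •
      (sin (2 * (α - α₀)) • sphereVec α β + cos (2 * (α - α₀)) • sphereVecDeriv α β)) α := by
  refine ((hasDerivAt_rr hd hc).smul (hasDerivAt_sphereVec α β)).congr_deriv ?_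
  rw [smul_add, smul_smul, smul_smul, add_comm]
  congr 2 <;> field_simp

lemma N_smul_of_pos {m : ℝ} (hm : 0 < m) (w : EuclideanSpace ℝ (Fin 4)) : N (m • w) = N w := by
  rw [N, N, norm_smul, norm_of_nonneg hm.le, mul_inv, smul_smul, mul_comm _ m, ← mul_assoc,
    mul_inv_cancel₀ hm.ne', one_mul]

lemma N_of_norm_eq_one {w : EuclideanSpace ℝ (Fin 4)} (hw : ‖w‖ = 1) : N w = w := by
  rw [N, hw, inv_one, one_smul]

lemma N_U {d : ℝ} (hd : 0 < d) {α₀ α : ℝ} (β : ℝ) (hc : 0 < cos (2 * (α - α₀))) :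
    N (U d α₀ α β) = sphereVec α β := by
  rw [U_eq_smul_sphereVec, N_smul_of_pos (rr_pos hd hc), N_of_norm_eq_one (norm_sphereVec α β)]

lemma N_deriv_U {d : ℝ} (hd : 0 < d) {α₀ α : ℝ} (β : ℝ) (hc : 0 < cos (2 * (α - α₀))) :
    N (deriv (U d α₀ · β) α) =
      sin (2 * (α - α₀)) • sphereVec α β + cos (2 * (α - α₀)) • sphereVecDeriv α β := by
  rw [(hasDerivAt_U hd β hc).deriv, N_smul_of_pos (div_pos (rr_pos hd hc) hc),
    N_of_norm_eq_one]
  rw [norm_smul_sphereVec_add_smul_sphereVecDeriv, sin_sq_add_cos_sq, sqrt_one]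

theorem stmt_14_general (d : ℝ) (hd : 0 < d) (α₁ α α₂ : ℝ)
    (h₁ : α₁ ≤ α) (hmid : α - α₁ = α₂ - α)
    (hlt : α - α₁ < π / 4) (β : ℝ) :
    U d α₁ α β = U d α₂ α β ∧
    N (deriv (fun a => U d α₁ a β) α) - N (deriv (fun a => U d α₂ a β) α)
      = (2 * Real.sin (2 * (α - α₁))) • N (U d α₁ α β) := by
  have hα₂ : 2 * (α - α₂) = -(2 * (α - α₁)) := by linarith
  have hc₁ : 0 < cos (2 * (α - α₁)) := cos_pos_of_mem_Ioo ⟨by linarith, by linarith⟩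
  have hc₂ : 0 < cos (2 * (α - α₂)) := by rwa [hα₂, cos_neg]
  constructor
  · simp only [U, rr, hα₂, cos_neg]
  · rw [N_deriv_U hd β hc₁, N_deriv_U hd β hc₂, N_U hd β hc₁, hα₂, sin_neg, cos_neg]
    module

theorem stmt_14 (d : ℝ) (hd : 0 < d) (α₁ α α₂ : ℝ)
    (h₁ : α₁ ≤ α) (h₂ : α ≤ α₂) (hmid : α - α₁ = α₂ - α)
    (hlt : α - α₁ < π / 4) (β : ℝ) :
    U d α₁ α β = U d α₂ α β ∧
    N (deriv (fun a => U d α₁ a β) α) - N (deriv (fun a => U d α₂ a β) α)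
      = (2 * Real.sin (2 * (α - α₁))) • N (U d α₁ α β) :=
  stmt_14_general d hd α₁ α α₂ h₁ hmid hlt β
end
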